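/- The canonical model is an L^A_CS-subset model: for a logic L^A_CS, define the canonical model M^C = (W^C, W0^C, V^C, E^C) by W^C = P(L_J^A); W0^C = {Γ ∈ W^C | Γ is a maximal L^A_CS-consistent set of formulas}; V^C(Γ,F)=1 iff F ∈ Γ; and E^C(Γ,t) = {Δ ∈ W^C | Δ ⊇ Γ/t}, where Γ/t := {F ∈ L_J^A | t:F ∈ Γ}. If L^A does not contain jd, or contains jd and either CS is axiomatically appropriate or jt ∈ L^A, then M^C is an L^A_CS-subset model. -/

import Mathlib

/-- Justification terms `Tm^A`: constants `c_i`, variables `x_i`, application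
`·`, sum `+` and `!`. -/
inductive TmA : Type
  | const : ℕ → TmA
  | var : ℕ → TmA
  | app : TmA → TmA → TmA
  | plus : TmA → TmA → TmA
  | bang : TmA → TmA

/-- Formulas of `L_J^A`: atomic propositions, `⊥`, implication and `t:F`. -/
inductive FmlA : Type
  | atom : ℕ → FmlA
  | bot : FmlA
  | imp : FmlA → FmlA → FmlA
  | just : TmA → FmlA → FmlA

namespace FmlA
/-- `¬A := A → ⊥`. -/
def neg (A : FmlA) : FmlA := A.imp .bot
/-- `A ∨ B := ¬A → B`. -/
def or' (A B : FmlA) : FmlA := A.neg.imp B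
/-- `A ∧ B := ¬(A → ¬B)`. -/
def and' (A B : FmlA) : FmlA := (A.imp B.neg).neg
end FmlA

/-- Which of the optional axioms j4, jd, jt belong to the logic `L^A`. -/
structure FlagsA : Type where
  j4 : Bool
  jd : Bool
  jt : Bool

/-- The axioms of the logic `L^A`: classical propositional axioms, j, j+,
together with the optional axioms j4, jd, jt as given by the flags. -/
inductive AAxiom (fl : FlagsA) : FmlA → Prop
  | cl1 (A B : FmlA) : AAxiom fl (A.imp (B.imp A))
  | cl2 (A B C : FmlA) :
      AAxiom fl ((A.imp (B.imp C)).imp ((A.imp B).imp (A.imp C)))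
  | cl3 (A : FmlA) : AAxiom fl (A.neg.neg.imp A)
  | j (s t : TmA) (A B : FmlA) :
      AAxiom fl ((FmlA.just s (A.imp B)).imp
        ((FmlA.just t A).imp (FmlA.just (s.app t) B)))
  | jplus (s t : TmA) (A : FmlA) :
      AAxiom fl (((FmlA.just s A).or' (FmlA.just t A)).imp
        (FmlA.just (s.plus t) A))
  | j4 (t : TmA) (A : FmlA) (h : fl.j4 = true) :
      AAxiom fl ((FmlA.just t A).imp (FmlA.just t.bang (FmlA.just t A)))
  | jd (t : TmA) (h : fl.jd = true) :
      AAxiom fl ((FmlA.just t FmlA.bot).imp FmlA.bot)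
  | jt (t : TmA) (A : FmlA) (h : fl.jt = true) :
      AAxiom fl ((FmlA.just t A).imp A)

/-- `bangIterA n t = !…!t` with `n` occurrences of `!`. -/
def bangIterA : ℕ → TmA → TmA
  | 0, t => t
  | n + 1, t => (bangIterA n t).bang

/-- `anFmlA c A n = !…!c : !…!c : … : !c : c : A` (with `n, n-1, …, 1, 0` bangs). -/
def anFmlA (c : TmA) (A : FmlA) : ℕ → FmlA
  | 0 => FmlA.just c A
  | n + 1 => FmlA.just (bangIterA (n + 1) c) (anFmlA c A n)

/-- A constant specification for `L^A`: a set of pairs `(c, A)` where `c` is a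
constant and `A` an axiom of `L^A`. -/
def IsCSA (fl : FlagsA) (CS : Set (ℕ × FmlA)) : Prop :=
  ∀ p ∈ CS, AAxiom fl p.2

/-- `CS` is axiomatically appropriate: every axiom has a constant justifying it. -/
def AxAppropriateA (fl : FlagsA) (CS : Set (ℕ × FmlA)) : Prop :=
  ∀ A : FmlA, AAxiom fl A → ∃ c : ℕ, (c, A) ∈ CS

/-- Hilbert-style derivability in `L^A_CS`: axioms of `L^A`, modus ponens, and
axiom necessitation. -/
inductive DerivA (fl : FlagsA) (CS : Set (ℕ × FmlA)) : FmlA → Prop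
  | ax {A : FmlA} : AAxiom fl A → DerivA fl CS A
  | mp {A B : FmlA} : DerivA fl CS (A.imp B) → DerivA fl CS A → DerivA fl CS B
  | an {c : ℕ} {A : FmlA} (n : ℕ) (h : (c, A) ∈ CS) :
      DerivA fl CS (anFmlA (TmA.const c) A n)

/-- An `L^A_CS`-subset model `(W, W0, V, E)`; `V ω F` encodes `V(ω,F) = 1`. -/
structure AModel (fl : FlagsA) (CS : Set (ℕ × FmlA)) (W : Type*) : Type _ where
  W0 : Set W
  V : W → FmlA → Prop
  E : W → TmA → Set W
  w0_nonempty : W0.Nonempty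
  v_bot : ∀ ω ∈ W0, ¬ V ω FmlA.bot
  v_imp : ∀ ω ∈ W0, ∀ F G : FmlA, V ω (F.imp G) ↔ (¬ V ω F ∨ V ω G)
  v_just : ∀ ω ∈ W0, ∀ (t : TmA) (F : FmlA),
      V ω (FmlA.just t F) ↔ E ω t ⊆ {υ | V υ F}
  e_plus : ∀ ω ∈ W0, ∀ s t : TmA, E ω (s.plus t) ⊆ E ω s ∩ E ω t
  e_app : ∀ ω ∈ W0, ∀ s t : TmA,
      E ω (s.app t) ⊆ {υ | ∀ F : FmlA,
        (∃ H : FmlA, E ω s ⊆ {x | V x (H.imp F)} ∧ E ω t ⊆ {x | V x H}) →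
          V υ F}
  e_jd : fl.jd = true → ∀ ω ∈ W0, ∀ t : TmA, ∃ υ ∈ W0, υ ∈ E ω t
  e_jt : fl.jt = true → ∀ ω ∈ W0, ∀ t : TmA, ω ∈ E ω t
  e_j4 : fl.j4 = true → ∀ ω ∈ W0, ∀ t : TmA,
      E ω t.bang ⊆ {υ | ∀ F : FmlA, V ω (FmlA.just t F) → V υ (FmlA.just t F)}
  e_cs : ∀ ω ∈ W0, ∀ (c : ℕ) (A : FmlA), (c, A) ∈ CS →
      E ω (TmA.const c) ⊆ {υ | V υ A}
  e_cs_bang : ∀ ω ∈ W0, ∀ (c : ℕ) (A : FmlA), (c, A) ∈ CS → ∀ n : ℕ,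
      E ω (bangIterA (n + 1) (TmA.const c)) ⊆
        {υ | V υ (anFmlA (TmA.const c) A n)}

/-- The conjunction `⋀Σ` of a finite (list of) formulas. -/
def conjListA : List FmlA → FmlA
  | [] => FmlA.bot.imp FmlA.bot
  | A :: l => A.and' (conjListA l)

/-- `Γ` is `L^A_CS`-consistent: `L^A_CS ⊬ ⋀Σ → ⊥` for every finite `Σ ⊆ Γ`. -/
def SetConsistentA (fl : FlagsA) (CS : Set (ℕ × FmlA)) (Γ : Set FmlA) : Prop :=
  ∀ l : List FmlA, (∀ A ∈ l, A ∈ Γ) →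
    ¬ DerivA fl CS ((conjListA l).imp FmlA.bot)

/-- `Γ` is maximal `L^A_CS`-consistent: it is consistent and no proper superset
of it is consistent. -/
def MaxConsistentA (fl : FlagsA) (CS : Set (ℕ × FmlA)) (Γ : Set FmlA) : Prop :=
  SetConsistentA fl CS Γ ∧ ∀ Δ : Set FmlA, Γ ⊂ Δ → ¬ SetConsistentA fl CS Δ

/-- `Γ/t := {F | t:F ∈ Γ}`. -/
def slashA (Γ : Set FmlA) (t : TmA) : Set FmlA := {F | FmlA.just t F ∈ Γ}

/-- The canonical evidence function: `E^C(Γ,t) = {Δ | Δ ⊇ Γ/t}`. -/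
def canonicalEA (Γ : Set FmlA) (t : TmA) : Set (Set FmlA) :=
  {Δ | slashA Γ t ⊆ Δ}

/-!
Since `V^C(Γ, F)` is membership and `Γ/t ⊆ Δ` for every `Δ ∈ E^C(Γ, t)` (with equality attained
by `Δ = Γ/t`), `t:F ∈ Γ` holds iff `E^C(Γ, t) ⊆ [F]`; each remaining condition on `E^C` is then the
closure of a maximal consistent set under the corresponding axiom (j, j+, j4, jt) or under axiom
necessitation. Normal worlds exist by Lindenbaum's lemma, the empty set being consistent because
erasing all justifications turns every theorem into a classical tautology. For jd one needs a
maximal consistent `Δ ⊇ Γ/t`, i.e. the consistency of `Γ/t`: under jt this holds as `Γ/t ⊆ Γ`;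
for an axiomatically appropriate `CS`, internalization turns a refutation of finitely many
`F₁, …, Fₙ ∈ Γ/t` into a term `s` with `s:⊥ ∈ Γ`, which jd rules out.
-/

inductive DerivFromA (fl : FlagsA) (CS : Set (ℕ × FmlA)) (Γ : Set FmlA) : FmlA → Prop
  | ax {A : FmlA} : AAxiom fl A → DerivFromA fl CS Γ A
  | an {c : ℕ} {A : FmlA} (n : ℕ) (h : (c, A) ∈ CS) :
      DerivFromA fl CS Γ (anFmlA (TmA.const c) A n)
  | hyp {A : FmlA} : A ∈ Γ → DerivFromA fl CS Γ A
  | mp {A B : FmlA} : DerivFromA fl CS Γ (A.imp B) → DerivFromA fl CS Γ A → DerivFromA fl CS Γ B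

namespace DerivFromA

variable {fl : FlagsA} {CS : Set (ℕ × FmlA)} {Γ : Set FmlA} {A B C X : FmlA}

theorem of_derivA (h : DerivA fl CS A) : DerivFromA fl CS Γ A := by
  induction h with
  | ax h => exact .ax h
  | mp _ _ ih₁ ih₂ => exact .mp ih₁ ih₂
  | an n h => exact .an n h

theorem derivA_of_empty (h : DerivFromA fl CS ∅ A) : DerivA fl CS A := by
  induction h with
  | ax h => exact .ax h
  | an n h => exact .an n h
  | hyp h => exact absurd h (Set.notMem_empty _)
  | mp _ _ ih₁ ih₂ => exact .mp ih₁ ih₂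

theorem imp_self : DerivFromA fl CS Γ (A.imp A) :=
  .mp (.mp (.ax (.cl2 A (A.imp A) A)) (.ax (.cl1 A (A.imp A)))) (.ax (.cl1 A A))

theorem deduction (h : DerivFromA fl CS (insert A Γ) B) : DerivFromA fl CS Γ (A.imp B) := by
  induction h with
  | ax h => exact .mp (.ax (.cl1 _ A)) (.ax h)
  | an n h => exact .mp (.ax (.cl1 _ A)) (.an n h)
  | hyp h =>
    rcases Set.mem_insert_iff.mp h with rfl | h
    · exact imp_self
    · exact .mp (.ax (.cl1 _ A)) (.hyp h)
  | mp _ _ ih₁ ih₂ => exact .mp (.mp (.ax (.cl2 A _ _)) ih₁) ih₂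

theorem bot_imp : DerivFromA fl CS Γ (FmlA.bot.imp A) :=
  deduction (.mp (.ax (.cl3 A)) (.mp (.ax (.cl1 FmlA.bot A.neg)) (.hyp (by simp))))

theorem imp_trans (h₁ : DerivFromA fl CS Γ (A.imp B)) (h₂ : DerivFromA fl CS Γ (B.imp C)) :
    DerivFromA fl CS Γ (A.imp C) :=
  .mp (.mp (.ax (.cl2 A B C)) (.mp (.ax (.cl1 (B.imp C) A)) h₂)) h₁

theorem and_intro : DerivFromA fl CS Γ (A.imp (B.imp (A.and' B))) :=
  deduction (deduction (deduction (.mp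
    (.mp (.hyp (Set.mem_insert _ _))
      (.hyp (Set.mem_insert_of_mem _ (Set.mem_insert_of_mem _ (Set.mem_insert _ _)))))
    (.hyp (Set.mem_insert_of_mem _ (Set.mem_insert _ _))))))

theorem and_left : DerivFromA fl CS Γ ((A.and' B).imp A) :=
  deduction (.mp (.ax (.cl3 A)) (deduction (.mp
    (.hyp (Set.mem_insert_of_mem _ (Set.mem_insert _ _)))
    (deduction (.mp bot_imp (.mp (.hyp (Set.mem_insert_of_mem _ (Set.mem_insert _ _)))
      (.hyp (Set.mem_insert _ _))))))))

theorem and_right : DerivFromA fl CS Γ ((A.and' B).imp B) :=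
  deduction (.mp (.ax (.cl3 B)) (deduction (.mp
    (.hyp (Set.mem_insert_of_mem _ (Set.mem_insert _ _)))
    (.mp (.ax (.cl1 B.neg A)) (.hyp (Set.mem_insert _ _))))))

theorem imp_and (h₁ : DerivFromA fl CS Γ (X.imp A)) (h₂ : DerivFromA fl CS Γ (X.imp B)) :
    DerivFromA fl CS Γ (X.imp (A.and' B)) :=
  .mp (.mp (.ax (.cl2 X B (A.and' B))) (imp_trans h₁ and_intro)) h₂

theorem conjListA_intro :
    ∀ l : List FmlA, (∀ A ∈ l, DerivFromA fl CS Γ A) → DerivFromA fl CS Γ (conjListA l)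
  | [], _ => imp_self
  | A :: l, h => .mp (.mp and_intro (h A (by simp)))
      (conjListA_intro l fun B hB => h B (by simp [hB]))

theorem conjListA_append_imp_left :
    ∀ l₁ l₂ : List FmlA, DerivFromA fl CS Γ ((conjListA (l₁ ++ l₂)).imp (conjListA l₁))
  | [], _ => .mp (.ax (.cl1 _ _)) imp_self
  | _ :: l₁, l₂ => imp_and and_left (imp_trans and_right (conjListA_append_imp_left l₁ l₂))

theorem conjListA_append_imp_right :
    ∀ l₁ l₂ : List FmlA, DerivFromA fl CS Γ ((conjListA (l₁ ++ l₂)).imp (conjListA l₂))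
  | [], _ => imp_self
  | _ :: l₁, l₂ => imp_trans and_right (conjListA_append_imp_right l₁ l₂)

theorem exists_list_derivA (h : DerivFromA fl CS Γ A) :
    ∃ l : List FmlA, (∀ B ∈ l, B ∈ Γ) ∧ DerivA fl CS ((conjListA l).imp A) := by
  induction h with
  | ax h => exact ⟨[], by simp, .mp (.ax (.cl1 _ _)) (.ax h)⟩
  | an n h => exact ⟨[], by simp, .mp (.ax (.cl1 _ _)) (.an n h)⟩
  | @hyp A h => exact ⟨[A], by simpa using h, derivA_of_empty and_left⟩
  | mp _ _ ih₁ ih₂ =>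
    obtain ⟨l₁, hl₁, d₁⟩ := ih₁
    obtain ⟨l₂, hl₂, d₂⟩ := ih₂
    refine ⟨l₁ ++ l₂, fun B hB => (List.mem_append.mp hB).elim (hl₁ B) (hl₂ B), ?_⟩
    have e₁ := imp_trans (conjListA_append_imp_left (Γ := ∅) l₁ l₂) (of_derivA d₁)
    have e₂ := imp_trans (conjListA_append_imp_right (Γ := ∅) l₁ l₂) (of_derivA d₂)
    exact derivA_of_empty (.mp (.mp (.ax (.cl2 _ _ _)) e₁) e₂)

theorem of_derivA_conjListA_imp {l : List FmlA} (hl : ∀ B ∈ l, B ∈ Γ)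
    (hd : DerivA fl CS ((conjListA l).imp A)) : DerivFromA fl CS Γ A :=
  .mp (.of_derivA hd) (conjListA_intro l fun B hB => .hyp (hl B hB))

theorem exists_mem_of_sUnion {c : Set (Set FmlA)} (hc : IsChain (· ⊆ ·) c) (hne : c.Nonempty)
    (h : DerivFromA fl CS (⋃₀ c) A) : ∃ Δ ∈ c, DerivFromA fl CS Δ A := by
  obtain ⟨l, hl, hd⟩ := h.exists_list_derivA
  obtain ⟨Δ, hΔc, hlΔ⟩ := hc.directedOn.exists_mem_subset_of_finite_of_subset_sUnion hne
    l.finite_toSet fun B hB => hl B hB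
  exact ⟨Δ, hΔc, of_derivA_conjListA_imp (fun B hB => hlΔ hB) hd⟩

end DerivFromA

section Consistency

variable {fl : FlagsA} {CS : Set (ℕ × FmlA)} {Γ Δ : Set FmlA} {A B : FmlA}

theorem setConsistentA_iff_not_derivFromA_bot :
    SetConsistentA fl CS Γ ↔ ¬ DerivFromA fl CS Γ FmlA.bot :=
  ⟨fun hc hd => let ⟨l, hl, hd⟩ := hd.exists_list_derivA; hc l hl hd,
    fun h _ hl hd => h (.of_derivA_conjListA_imp hl hd)⟩

theorem SetConsistentA.mono (hΓΔ : Γ ⊆ Δ) (hΔ : SetConsistentA fl CS Δ) :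
    SetConsistentA fl CS Γ :=
  fun l hl => hΔ l fun A hA => hΓΔ (hl A hA)

namespace MaxConsistentA

theorem derivFromA_neg_of_notMem (hm : MaxConsistentA fl CS Γ) (hA : A ∉ Γ) :
    DerivFromA fl CS Γ A.neg := by
  have h := hm.2 _ (Set.ssubset_insert hA)
  rw [setConsistentA_iff_not_derivFromA_bot, not_not] at h
  exact h.deduction

theorem mem_of_derivFromA (hm : MaxConsistentA fl CS Γ) (h : DerivFromA fl CS Γ A) : A ∈ Γ :=
  by_contra fun hA =>
    setConsistentA_iff_not_derivFromA_bot.mp hm.1 (.mp (hm.derivFromA_neg_of_notMem hA) h)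

theorem mem_of_derivA (hm : MaxConsistentA fl CS Γ) (h : DerivA fl CS A) : A ∈ Γ :=
  hm.mem_of_derivFromA (.of_derivA h)

theorem mem_of_imp_mem (hm : MaxConsistentA fl CS Γ) (hAB : A.imp B ∈ Γ) (hA : A ∈ Γ) :
    B ∈ Γ :=
  hm.mem_of_derivFromA (.mp (.hyp hAB) (.hyp hA))

theorem mem_of_axiom_imp (hm : MaxConsistentA fl CS Γ) (hAB : AAxiom fl (A.imp B))
    (hA : A ∈ Γ) : B ∈ Γ :=
  hm.mem_of_imp_mem (hm.mem_of_derivA (.ax hAB)) hA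

theorem just_app_mem (hm : MaxConsistentA fl CS Γ) {s t : TmA}
    (hs : FmlA.just s (A.imp B) ∈ Γ) (ht : FmlA.just t A ∈ Γ) : FmlA.just (s.app t) B ∈ Γ :=
  hm.mem_of_imp_mem (hm.mem_of_axiom_imp (.j s t A B) hs) ht

theorem bot_notMem (hm : MaxConsistentA fl CS Γ) : FmlA.bot ∉ Γ :=
  fun h => setConsistentA_iff_not_derivFromA_bot.mp hm.1 (.hyp h)

theorem imp_mem_iff (hm : MaxConsistentA fl CS Γ) : A.imp B ∈ Γ ↔ (A ∉ Γ ∨ B ∈ Γ) := by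
  refine ⟨fun h => or_iff_not_imp_left.mpr fun hA => hm.mem_of_imp_mem h (not_not.mp hA), ?_⟩
  rintro (hA | hB)
  · exact hm.mem_of_derivFromA (.imp_trans (hm.derivFromA_neg_of_notMem hA) .bot_imp)
  · exact hm.mem_of_derivFromA (.mp (.ax (.cl1 B A)) (.hyp hB))

theorem or'_mem_iff (hm : MaxConsistentA fl CS Γ) : A.or' B ∈ Γ ↔ (A ∈ Γ ∨ B ∈ Γ) := by
  simp only [FmlA.or', FmlA.neg, hm.imp_mem_iff, hm.bot_notMem, or_false, not_not]

end MaxConsistentA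

def erasedTruthA : FmlA → Prop
  | .atom _ => True
  | .bot => False
  | .imp A B => erasedTruthA A → erasedTruthA B
  | .just _ F => erasedTruthA F

theorem erasedTruthA_of_aAxiom (h : AAxiom fl A) : erasedTruthA A := by
  cases h <;> simp only [erasedTruthA, FmlA.neg, FmlA.or'] <;> tauto

theorem erasedTruthA_anFmlA (c : TmA) (A : FmlA) :
    ∀ n : ℕ, erasedTruthA (anFmlA c A n) ↔ erasedTruthA A
  | 0 => Iff.rfl
  | n + 1 => erasedTruthA_anFmlA c A n

theorem DerivA.erasedTruthA (hCS : IsCSA fl CS) (h : DerivA fl CS A) : erasedTruthA A := by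
  induction h with
  | ax h => exact erasedTruthA_of_aAxiom h
  | mp _ _ ih₁ ih₂ => exact ih₁ ih₂
  | an n h => exact (erasedTruthA_anFmlA _ _ n).mpr (erasedTruthA_of_aAxiom (hCS _ h))

theorem setConsistentA_empty (hCS : IsCSA fl CS) : SetConsistentA fl CS ∅ := by
  rintro (_ | ⟨A, _⟩) hl hd
  · exact hd.erasedTruthA hCS id
  · exact Set.notMem_empty A (hl A List.mem_cons_self)

theorem exists_maxConsistentA_superset (hΓ : SetConsistentA fl CS Γ) :
    ∃ Δ, Γ ⊆ Δ ∧ MaxConsistentA fl CS Δ := by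
  simp only [setConsistentA_iff_not_derivFromA_bot] at hΓ
  obtain ⟨Δ, hΓΔ, hΔ⟩ := zorn_subset_nonempty {Δ | ¬ DerivFromA fl CS Δ FmlA.bot}
    (fun c hcS hc hne => ⟨⋃₀ c, fun h => let ⟨Δ, hΔc, hΔ⟩ := h.exists_mem_of_sUnion hc hne;
      hcS hΔc hΔ, fun _ => Set.subset_sUnion_of_mem⟩) Γ hΓ
  refine ⟨Δ, hΓΔ, setConsistentA_iff_not_derivFromA_bot.mpr hΔ.prop, fun Δ' hΔΔ' hΔ' => ?_⟩
  rw [setConsistentA_iff_not_derivFromA_bot] at hΔ'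
  exact hΔΔ'.not_subset (hΔ.le_of_ge hΔ' hΔΔ'.subset)

end Consistency

section Internalization

variable {fl : FlagsA} {CS : Set (ℕ × FmlA)} {Γ : Set FmlA}

theorem DerivA.exists_just (hap : AxAppropriateA fl CS) {A : FmlA} (h : DerivA fl CS A) :
    ∃ u : TmA, DerivA fl CS (FmlA.just u A) := by
  induction h with
  | ax h =>
    obtain ⟨c, hc⟩ := hap _ h
    exact ⟨TmA.const c, .an 0 hc⟩
  | mp _ _ ih₁ ih₂ =>
    obtain ⟨u, hu⟩ := ih₁
    obtain ⟨v, hv⟩ := ih₂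
    exact ⟨u.app v, .mp (.mp (.ax (.j u v _ _)) hu) hv⟩
  | an n h => exact ⟨bangIterA (n + 1) (TmA.const _), .an (n + 1) h⟩

theorem MaxConsistentA.exists_just_conjListA (hm : MaxConsistentA fl CS Γ)
    (hap : AxAppropriateA fl CS) {t : TmA} :
    ∀ l : List FmlA, (∀ A ∈ l, A ∈ slashA Γ t) → ∃ s : TmA, FmlA.just s (conjListA l) ∈ Γ
  | [], _ =>
    let ⟨u, hu⟩ := DerivA.exists_just hap (DerivFromA.derivA_of_empty .imp_self)
    ⟨u, hm.mem_of_derivA hu⟩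
  | A :: l, hl => by
    obtain ⟨s, hs⟩ := hm.exists_just_conjListA hap l fun B hB => hl B (List.mem_cons_of_mem _ hB)
    obtain ⟨w, hw⟩ := DerivA.exists_just hap
      (DerivFromA.derivA_of_empty (DerivFromA.and_intro (A := A) (B := conjListA l)))
    exact ⟨(w.app t).app s,
      hm.just_app_mem (hm.just_app_mem (hm.mem_of_derivA hw) (hl A List.mem_cons_self)) hs⟩

theorem MaxConsistentA.setConsistentA_slashA (hm : MaxConsistentA fl CS Γ) (hjd : fl.jd = true)
    (h : AxAppropriateA fl CS ∨ fl.jt = true) (t : TmA) : SetConsistentA fl CS (slashA Γ t) := by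
  rcases h with hap | hjt
  · intro l hl hd
    obtain ⟨s, hs⟩ := hm.exists_just_conjListA hap l hl
    obtain ⟨u, hu⟩ := DerivA.exists_just hap hd
    exact hm.bot_notMem
      (hm.mem_of_axiom_imp (.jd _ hjd) (hm.just_app_mem (hm.mem_of_derivA hu) hs))
  · exact hm.1.mono fun F hF => hm.mem_of_axiom_imp (.jt t F hjt) hF

end Internalization

theorem canonicalEA_subset_iff {Γ : Set FmlA} {t : TmA} {F : FmlA} :
    canonicalEA Γ t ⊆ {Δ | F ∈ Δ} ↔ FmlA.just t F ∈ Γ :=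
  ⟨fun h => h (Set.Subset.refl (slashA Γ t)), fun h _ hΔ => hΔ h⟩

section CanonicalModel

variable {fl : FlagsA} {CS : Set (ℕ × FmlA)}

def canonicalModelA (hCS : IsCSA fl CS)
    (hjd : fl.jd = true → AxAppropriateA fl CS ∨ fl.jt = true) : AModel fl CS (Set FmlA) where
  W0 := {Γ | MaxConsistentA fl CS Γ}
  V Γ F := F ∈ Γ
  E := canonicalEA
  w0_nonempty :=
    let ⟨Δ, _, hΔ⟩ := exists_maxConsistentA_superset (setConsistentA_empty hCS)
    ⟨Δ, hΔ⟩
  v_bot _ hΓ := hΓ.bot_notMem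
  v_imp _ hΓ _ _ := hΓ.imp_mem_iff
  v_just _ _ _ _ := canonicalEA_subset_iff.symm
  e_plus _ hΓ s t _ hΔ :=
    ⟨fun F hF => hΔ (hΓ.mem_of_axiom_imp (.jplus s t F) (hΓ.or'_mem_iff.mpr (.inl hF))),
      fun F hF => hΔ (hΓ.mem_of_axiom_imp (.jplus s t F) (hΓ.or'_mem_iff.mpr (.inr hF)))⟩
  e_app _ hΓ _ _ _ hΔ _ := fun ⟨_, hs, ht⟩ =>
    hΔ (hΓ.just_app_mem (canonicalEA_subset_iff.mp hs) (canonicalEA_subset_iff.mp ht))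
  e_jd h _ hΓ t :=
    let ⟨Δ, hsub, hΔ⟩ := exists_maxConsistentA_superset (hΓ.setConsistentA_slashA h (hjd h) t)
    ⟨Δ, hΔ, hsub⟩
  e_jt h _ hΓ t F hF := hΓ.mem_of_axiom_imp (.jt t F h) hF
  e_j4 h _ hΓ t _ hΔ F hF := hΔ (hΓ.mem_of_axiom_imp (.j4 t F h) hF)
  e_cs _ hΓ _ _ hcA _ hΔ := hΔ (hΓ.mem_of_derivA (.an 0 hcA))
  e_cs_bang _ hΓ _ _ hcA n _ hΔ := hΔ (hΓ.mem_of_derivA (.an (n + 1) hcA))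

end CanonicalModel

/-- **The canonical model is an `L^A_CS`-subset model**: the structure with
worlds `W^C = P(L_J^A)`, normal worlds the maximal `L^A_CS`-consistent sets,
`V^C(Γ,F)=1` iff `F ∈ Γ`, and `E^C(Γ,t) = {Δ | Δ ⊇ Γ/t}` is an `L^A_CS`-subset
model, provided `L^A` does not contain jd, or contains jd and either `CS` is
axiomatically appropriate or `jt ∈ L^A`. -/
theorem canonical_model_is_A_subset_model (fl : FlagsA) (CS : Set (ℕ × FmlA))
    (hCS : IsCSA fl CS)
    (h : fl.jd = false ∨
      (fl.jd = true ∧ (AxAppropriateA fl CS ∨ fl.jt = true))) :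
    ∃ M : AModel fl CS (Set FmlA),
      M.W0 = {Γ : Set FmlA | MaxConsistentA fl CS Γ} ∧
      M.V = (fun Γ F => F ∈ Γ) ∧
      M.E = canonicalEA := by
  refine ⟨canonicalModelA hCS fun hjd => ?_, rfl, rfl, rfl⟩
  rcases h with h | ⟨-, h⟩
  · exact absurd hjd (by simp [h])
  · exact h
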